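/- Let a group G act by automorphisms on trees T and T′, and let θ: T → T′ be a surjective, G-equivariant graph homomorphism. Let C be the set of vertices v of T such that no arc with origin v is pre-backtracking for θ. Then C is G-invariant, C is convex (if u, w ∈ C and d(u,v) + d(v,w) = d(u,w) then v ∈ C), and θ is injective on C. -/

import Mathlib

open SimpleGraph

variable {V V' : Type*}

/-- The automorphism group of a simple graph `T`, as a subgroup of `Equiv.Perm V`. -/
def SimpleGraph.autGroup (T : SimpleGraph V) : Subgroup (Equiv.Perm V) where
  carrier := {g : Equiv.Perm V | ∀ u v : V, T.Adj (g u) (g v) ↔ T.Adj u v}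
  one_mem' := by intro u v; simp
  mul_mem' := by
    intro a b ha hb u v
    simpa using (ha (b u) (b v)).trans (hb u v)
  inv_mem' := by
    intro a ha u v
    simpa using (ha (a⁻¹ u) (a⁻¹ v)).symm

/-- A graph homomorphism `θ : T →g T'` is locally surjective if for each vertex `v` of `T`,
every vertex of `T'` adjacent to `θ v` is the image of a vertex adjacent to `v`. -/
def LocallySurjective {T : SimpleGraph V} {T' : SimpleGraph V'} (θ : T →g T') : Prop :=
  ∀ v : V, ∀ w' : V', T'.Adj (θ v) w' → ∃ w : V, T.Adj v w ∧ θ w = w'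

/-- The arc `(u,v)` is backtracking for `θ` if some vertex `u' ≠ u` adjacent to `v`
has `θ u' = θ u`. -/
def Backtracking {T : SimpleGraph V} {T' : SimpleGraph V'} (θ : T →g T') (u v : V) : Prop :=
  T.Adj u v ∧ ∃ u' : V, u' ≠ u ∧ T.Adj u' v ∧ θ u' = θ u

/-- The arc `(u,v)` is pre-backtracking for `θ` if there is a backtracking arc `(u',v')`
whose half-tree `T_{(u',v')}` is contained in the half-tree `T_{(u,v)}`. -/
def PreBacktracking {T : SimpleGraph V} {T' : SimpleGraph V'} (θ : T →g T') (u v : V) : Prop :=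
  T.Adj u v ∧ ∃ u' v' : V, Backtracking θ u' v' ∧
    ∀ w : V, T.dist w v' < T.dist w u' → T.dist w v < T.dist w u

/-! In a tree, a vertex `v` starts a pre-backtracking arc exactly when some backtracking arc
`(a, b)` has `v` outside its half-tree `T_{(a,b)}`: if `v ≠ a`, the half-tree `T_{(a,b)}` lies in
`T_{(v,y)}` for the neighbour `y` of `v` towards `a`. So `C` is the intersection of the half-trees
of the backtracking arcs. Half-trees are convex, since a geodesic leaving `T_{(a,b)}` passes through
`a`; hence `C` is convex. Equivariant automorphisms permute pre-backtracking arcs, so `C` is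
invariant. Finally, for `a ∈ C` the image under `θ` of a geodesic from `a` never turns back (a turn
at its end would be a backtracking arc whose half-tree misses `a`), so it is a path in `T'`; if
`θ a = θ b` for some `b ∈ C`, that path is closed, hence trivial. -/

namespace SimpleGraph

def halfTree (G : SimpleGraph V) (x y : V) : Set V := {w | G.dist w y < G.dist w x}

variable {G : SimpleGraph V} {G' : SimpleGraph V'}

theorem Walk.map_concat (f : G →g G') {u v w : V} (p : G.Walk u v) (h : G.Adj v w) :
    (p.concat h).map f = (p.map f).concat (f.map_adj h) := by
  simp [Walk.concat, Walk.map_append]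

theorem Iso.dist_apply (f : G ≃g G') (u v : V) : G'.dist (f u) (f v) = G.dist u v := by
  rw [dist_eq_sInf, dist_eq_sInf]
  congr 1
  ext n
  constructor
  · rintro ⟨p, rfl⟩
    exact ⟨(p.map f.symm.toHom).copy (f.symm_apply_apply u) (f.symm_apply_apply v), by simp⟩
  · rintro ⟨p, rfl⟩
    exact ⟨p.map f.toHom, by simp⟩

theorem Iso.apply_mem_halfTree_iff (f : G ≃g G') {x y w : V} :
    f w ∈ G'.halfTree (f x) (f y) ↔ w ∈ G.halfTree x y := by
  change G'.dist (f w) (f y) < G'.dist (f w) (f x) ↔ G.dist w y < G.dist w x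
  rw [f.dist_apply, f.dist_apply]

def isoOfAutGroup {T : SimpleGraph V} (g : T.autGroup) : T ≃g T :=
  ⟨g.val, g.prop _ _⟩

theorem Connected.exists_adj_dist_add_one (hG : G.Connected) {u v : V} (hne : u ≠ v) :
    ∃ y, G.Adj u y ∧ G.dist y v + 1 = G.dist u v := by
  obtain ⟨p, hp⟩ := hG.exists_walk_length_eq_dist u v
  cases p with
  | nil => exact absurd rfl hne
  | @cons _ y _ huy q =>
    refine ⟨y, huy, le_antisymm ?_ ?_⟩
    · have := dist_le q
      rw [Walk.length_cons] at hp
      omega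
    · have := hG.dist_triangle (u := u) (v := y) (w := v)
      rwa [dist_eq_one_iff_adj.mpr huy, add_comm] at this

theorem IsTree.eq_of_adj_of_dist_add_one (hG : G.IsTree) {r p q₁ q₂ : V} (h₁ : G.Adj q₁ p)
    (h₂ : G.Adj q₂ p) (d₁ : G.dist r q₁ + 1 = G.dist r p) (d₂ : G.dist r q₂ + 1 = G.dist r p) :
    q₁ = q₂ := by
  obtain ⟨w₁, hw₁⟩ := hG.connected.exists_walk_length_eq_dist r q₁
  obtain ⟨w₂, hw₂⟩ := hG.connected.exists_walk_length_eq_dist r q₂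
  have hp₁ : (w₁.concat h₁).IsPath :=
    Walk.isPath_of_length_eq_dist _ (by rw [Walk.length_concat]; omega)
  have hp₂ : (w₂.concat h₂).IsPath :=
    Walk.isPath_of_length_eq_dist _ (by rw [Walk.length_concat]; omega)
  have := congrArg Subtype.val ((hG.isAcyclic.subsingleton_path r p).elim ⟨_, hp₁⟩ ⟨_, hp₂⟩)
  exact (Walk.concat_inj this).1

theorem IsTree.eq_of_adj_of_mem_halfTree_of_notMem (hG : G.IsTree) {v x a c : V}
    (hvx : G.Adj v x) (hac : G.Adj a c) (ha : a ∈ G.halfTree v x) (hc : c ∉ G.halfTree v x) :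
    c = v := by
  have hc' : G.dist c v < G.dist c x := lt_of_le_of_ne (not_lt.mp hc) (hG.dist_ne_of_adj c hvx)
  have hxv := dist_eq_one_iff_adj.mpr hvx.symm
  have hca := dist_eq_one_iff_adj.mpr hac.symm
  by_cases hax : a = x
  · subst hax
    exact hG.connected.dist_eq_zero_iff.mp (by omega)
  obtain ⟨a', haa', ha'⟩ := hG.connected.exists_adj_dist_add_one hax
  have hac' := dist_eq_one_iff_adj.mpr hac
  have haa'' := dist_eq_one_iff_adj.mpr haa'
  have h₁ := hG.connected.dist_triangle (u := a) (v := x) (w := v)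
  have h₂ := hG.connected.dist_triangle (u := a) (v := c) (w := v)
  have h₃ := hG.connected.dist_triangle (u := c) (v := a) (w := x)
  have h₄ := hG.connected.dist_triangle (u := a') (v := x) (w := v)
  have h₅ := hG.connected.dist_triangle (u := a) (v := a') (w := v)
  change G.dist a x < G.dist a v at ha
  -- `a'` and `c` are both the neighbour of `a` towards `v`, but `a'` lies on the side of `x`
  have : a' = c := hG.eq_of_adj_of_dist_add_one haa'.symm hac.symm (r := v)
    (by rw [dist_comm (u := v), dist_comm (u := v)]; omega)
    (by rw [dist_comm (u := v), dist_comm (u := v)]; omega)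
  subst this
  omega

theorem IsTree.mem_support_of_mem_halfTree_of_notMem (hG : G.IsTree) {v x : V}
    (hvx : G.Adj v x) : ∀ {a b : V} (p : G.Walk a b), a ∈ G.halfTree v x →
      b ∉ G.halfTree v x → v ∈ p.support
  | _, _, .nil, ha, hb => absurd ha hb
  | _, _, .cons (v := c) hac p, ha, hb => by
    by_cases hc : c ∈ G.halfTree v x
    · exact List.mem_cons_of_mem _ (hG.mem_support_of_mem_halfTree_of_notMem hvx p hc hb)
    · obtain rfl := hG.eq_of_adj_of_mem_halfTree_of_notMem hvx hac ha hc
      exact List.mem_cons_of_mem _ p.start_mem_support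

theorem IsTree.dist_eq_add_of_mem_halfTree_of_notMem (hG : G.IsTree) {v x w u : V}
    (hvx : G.Adj v x) (hw : w ∈ G.halfTree v x) (hu : u ∉ G.halfTree v x) :
    G.dist w u = G.dist w v + G.dist v u := by
  classical
  obtain ⟨p, hp⟩ := hG.connected.exists_walk_length_eq_dist w u
  have hv := hG.mem_support_of_mem_halfTree_of_notMem hvx p hw hu
  rw [← hp, ← length_eq_dist_of_subwalk hp (p.isSubwalk_takeUntil hv),
    ← length_eq_dist_of_subwalk hp (p.isSubwalk_dropUntil hv), ← Walk.length_append,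
    Walk.take_spec]

theorem IsTree.mem_halfTree_of_dist_add_dist_eq (hG : G.IsTree) {a b u v w : V}
    (hab : G.Adj a b) (hu : u ∈ G.halfTree a b) (hw : w ∈ G.halfTree a b)
    (huvw : G.dist u v + G.dist v w = G.dist u w) : v ∈ G.halfTree a b := by
  by_contra hv
  have h₁ := hG.dist_eq_add_of_mem_halfTree_of_notMem hab hu hv
  have h₂ := hG.dist_eq_add_of_mem_halfTree_of_notMem hab hw hv
  have h₃ := hG.connected.dist_triangle (u := u) (v := b) (w := w)
  change G.dist u b < G.dist u a at hu
  change G.dist w b < G.dist w a at hw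
  rw [dist_comm (u := v) (v := w)] at huvw
  rw [dist_comm (u := b) (v := w)] at h₃
  omega

theorem IsTree.halfTree_subset_halfTree (hG : G.IsTree) {a b v y : V} (hab : G.Adj a b)
    (hv : v ∉ G.halfTree a b) (hy : G.dist y a + 1 = G.dist v a) :
    G.halfTree a b ⊆ G.halfTree v y := by
  intro t ht
  have h₁ := hG.dist_eq_add_of_mem_halfTree_of_notMem hab ht hv
  have h₂ := hG.connected.dist_triangle (u := t) (v := a) (w := y)
  change G.dist t y < G.dist t v
  rw [dist_comm (u := a) (v := v)] at h₁
  rw [dist_comm (u := a) (v := y)] at h₂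
  omega

end SimpleGraph

section Backtracking

variable {T : SimpleGraph V} {T' : SimpleGraph V'} {θ : T →g T'}

theorem preBacktracking_iff {u v : V} : PreBacktracking θ u v ↔
    T.Adj u v ∧ ∃ u' v', Backtracking θ u' v' ∧ T.halfTree u' v' ⊆ T.halfTree u v :=
  Iff.rfl

def nonPreBacktrackingSet (θ : T →g T') : Set V :=
  {v | ¬ ∃ u, PreBacktracking θ v u}

theorem Backtracking.iso (f : T ≃g T) {τ : V' → V'} (hf : ∀ x, θ (f x) = τ (θ x)) {u v : V}
    (h : Backtracking θ u v) : Backtracking θ (f u) (f v) := by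
  obtain ⟨huv, u', hne, hu'v, hθ⟩ := h
  exact ⟨f.map_adj_iff.mpr huv, f u', f.injective.ne hne, f.map_adj_iff.mpr hu'v,
    by rw [hf, hf, hθ]⟩

theorem PreBacktracking.iso (f : T ≃g T) {τ : V' → V'} (hf : ∀ x, θ (f x) = τ (θ x))
    {u v : V} (h : PreBacktracking θ u v) : PreBacktracking θ (f u) (f v) := by
  obtain ⟨huv, u', v', hback, hsub⟩ := preBacktracking_iff.mp h
  refine preBacktracking_iff.mpr ⟨f.map_adj_iff.mpr huv, f u', f v', hback.iso f hf, ?_⟩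
  intro w hw
  rw [← f.apply_symm_apply w, f.apply_mem_halfTree_iff] at hw ⊢
  exact hsub hw

theorem iso_mem_nonPreBacktrackingSet (f : T ≃g T) {τ : V' → V'}
    (hf : ∀ x, θ (f.symm x) = τ (θ x)) {v : V} (hv : v ∈ nonPreBacktrackingSet θ) :
    f v ∈ nonPreBacktrackingSet θ := by
  rintro ⟨u, hu⟩
  exact hv ⟨f.symm u, by simpa using hu.iso f.symm hf⟩

theorem mem_nonPreBacktrackingSet_iff (hT : T.IsTree) {v : V} :
    v ∈ nonPreBacktrackingSet θ ↔ ∀ a b, Backtracking θ a b → v ∈ T.halfTree a b := by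
  constructor
  · intro hv a b hab
    by_contra hvab
    apply hv
    by_cases hva : v = a
    · subst hva
      exact ⟨b, preBacktracking_iff.mpr ⟨hab.1, v, b, hab, subset_rfl⟩⟩
    · obtain ⟨y, hvy, hy⟩ := hT.connected.exists_adj_dist_add_one hva
      exact ⟨y, preBacktracking_iff.mpr
        ⟨hvy, a, b, hab, hT.halfTree_subset_halfTree hab.1 hvab hy⟩⟩
  · rintro h ⟨x, hx⟩
    obtain ⟨-, a, b, hab, hsub⟩ := preBacktracking_iff.mp hx
    have : T.dist v x < T.dist v v := hsub (h a b hab)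
    simp at this

theorem mem_nonPreBacktrackingSet_of_dist_add_dist_eq (hT : T.IsTree) {u v w : V}
    (hu : u ∈ nonPreBacktrackingSet θ) (hw : w ∈ nonPreBacktrackingSet θ)
    (huvw : T.dist u v + T.dist v w = T.dist u w) : v ∈ nonPreBacktrackingSet θ := by
  rw [mem_nonPreBacktrackingSet_iff hT] at hu hw ⊢
  exact fun a b hab => hT.mem_halfTree_of_dist_add_dist_eq hab.1 (hu a b hab) (hw a b hab) huvw

theorem isPath_map_of_length_eq_dist (hT' : T'.IsAcyclic) {a b : V} (p : T.Walk a b)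
    (hp : p.length = T.dist a b) (ha : ∀ x y, Backtracking θ x y → a ∈ T.halfTree x y) :
    (p.map θ).IsPath := by
  induction p using Walk.concatRec with
  | Hnil => simp
  | @Hconcat a b c p hbc ih =>
    have hp' : p.length = T.dist a b := length_eq_dist_of_subwalk hp (p.isSubwalk_concat hbc)
    have hpath := ih hp' ha
    rw [Walk.length_concat] at hp
    rw [Walk.map_concat]
    refine hpath.concat (fun hc => ?_) _
    have hθc : θ c = θ p.penultimate := by
      rw [hT'.eq_penultimate_of_adj_end hpath (θ.map_adj hbc) hc, Walk.penultimate,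
        Walk.getVert_map, Walk.length_map]
    by_cases hnil : p.Nil
    · obtain rfl := hnil.eq
      rw [Walk.eq_nil_iff_nil.mpr hnil] at hθc
      exact (θ.map_adj hbc).ne hθc.symm
    · have hpen : T.dist a p.penultimate ≤ p.length - 1 := by
        simpa [Walk.length_dropLast] using dist_le p.dropLast
      have hback : Backtracking θ p.penultimate b :=
        ⟨p.adj_penultimate hnil, c, fun h => by rw [h] at hp; omega, hbc.symm, hθc⟩
      have : T.dist a b < T.dist a p.penultimate := ha _ _ hback
      omega

theorem injOn_nonPreBacktrackingSet (hT : T.IsTree) (hT' : T'.IsAcyclic) :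
    Set.InjOn θ (nonPreBacktrackingSet θ) := by
  intro a ha b _ hab
  obtain ⟨p, hp⟩ := hT.connected.exists_walk_length_eq_dist a b
  have hpath := isPath_map_of_length_eq_dist hT' p hp ((mem_nonPreBacktrackingSet_iff hT).mp ha)
  obtain ⟨q, hq, hlen⟩ : ∃ q : T'.Walk (θ a) (θ a), q.IsPath ∧ q.length = p.length :=
    ⟨(p.map θ).copy rfl hab.symm, (Walk.isPath_copy _ _ _).mpr hpath, by simp⟩
  rw [(Walk.isPath_iff_nil.mp hq).length_eq_zero] at hlen
  exact hT.connected.dist_eq_zero_iff.mp (hp ▸ hlen.symm)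

end Backtracking

theorem nonPreBacktracking_set_invariant_convex_injective_general
    {G : Type*} [Group G]
    (T : SimpleGraph V) (T' : SimpleGraph V') (hT : T.IsTree) (hT' : T'.IsTree)
    (φ : G →* ↥(T.autGroup)) (ψ : G →* ↥(T'.autGroup))
    (θ : T →g T')
    (hequiv : ∀ (g : G) (x : V), θ ((φ g).val x) = (ψ g).val (θ x)) :
    (∀ g : G, ∀ v : V, v ∈ {v : V | ¬ ∃ u : V, PreBacktracking θ v u} →
      (φ g).val v ∈ {v : V | ¬ ∃ u : V, PreBacktracking θ v u}) ∧
    (∀ u ∈ {v : V | ¬ ∃ u : V, PreBacktracking θ v u},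
      ∀ w ∈ {v : V | ¬ ∃ u : V, PreBacktracking θ v u},
      ∀ v : V, T.dist u v + T.dist v w = T.dist u w →
        v ∈ {v : V | ¬ ∃ u : V, PreBacktracking θ v u}) ∧
    (∀ u ∈ {v : V | ¬ ∃ u : V, PreBacktracking θ v u},
      ∀ v ∈ {v : V | ¬ ∃ u : V, PreBacktracking θ v u},
      θ u = θ v → u = v) := by
  refine ⟨fun g v hv => ?_, fun u hu w hw v huvw =>
    mem_nonPreBacktrackingSet_of_dist_add_dist_eq hT hu hw huvw,
    injOn_nonPreBacktrackingSet hT hT'.isAcyclic⟩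
  refine iso_mem_nonPreBacktrackingSet (isoOfAutGroup (φ g)) (τ := (ψ g⁻¹).val) (fun x => ?_) hv
  rw [← hequiv]
  simp [isoOfAutGroup]

/-- Lemma: let a group `G` act by automorphisms on trees `T`, `T'` and let `θ : T → T'` be a
surjective `G`-equivariant graph homomorphism. Then the set `C` of vertices of `T` from
which no pre-backtracking arc originates is `G`-invariant, convex, and `θ` is injective
on `C`. -/
theorem nonPreBacktracking_set_invariant_convex_injective
    {G : Type*} [Group G]
    (T : SimpleGraph V) (T' : SimpleGraph V') (hT : T.IsTree) (hT' : T'.IsTree)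
    (φ : G →* ↥(T.autGroup)) (ψ : G →* ↥(T'.autGroup))
    (θ : T →g T') (hsurj : Function.Surjective ⇑θ)
    (hequiv : ∀ (g : G) (x : V), θ ((φ g).val x) = (ψ g).val (θ x)) :
    (∀ g : G, ∀ v : V, v ∈ {v : V | ¬ ∃ u : V, PreBacktracking θ v u} →
      (φ g).val v ∈ {v : V | ¬ ∃ u : V, PreBacktracking θ v u}) ∧
    (∀ u ∈ {v : V | ¬ ∃ u : V, PreBacktracking θ v u},
      ∀ w ∈ {v : V | ¬ ∃ u : V, PreBacktracking θ v u},
      ∀ v : V, T.dist u v + T.dist v w = T.dist u w →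
        v ∈ {v : V | ¬ ∃ u : V, PreBacktracking θ v u}) ∧
    (∀ u ∈ {v : V | ¬ ∃ u : V, PreBacktracking θ v u},
      ∀ v ∈ {v : V | ¬ ∃ u : V, PreBacktracking θ v u},
      θ u = θ v → u = v) :=
  nonPreBacktracking_set_invariant_convex_injective_general T T' hT hT' φ ψ θ hequiv
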